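/- Let ℓ = (ℓ_1, …, ℓ_m) and ℓ' = (ℓ'_1, …, ℓ'_m) be vectors of nonnegative integers with ℓ_i ≤ ℓ'_i for every i ∈ [m]. Then for every map h : {0,1}^m → {yes, no}, there exists a map h' : {0,1}^m → {yes, no} such that the advantage of the SSEQ algorithm (h', ℓ') is at least the advantage of the SSEQ algorithm (h, ℓ). In other words, the highest achievable advantage in SSEQ is monotonically non-decreasing in the coordinates of ℓ. -/
import Mathlib


open Finset

/-- Probability that the SSEQ oracle, on hidden set `A ⊆ [m]` and element queries
`ℓ = (ℓ_1, …, ℓ_m)`, returns the response `b ∈ {0,1}^m`: entries are independent,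
`b_i = 0` if `i ∉ A`, and `b_i = 1` with probability `λ(ℓ_i) = 1 - (1 - ρ)^{ℓ_i}`
if `i ∈ A`. -/
noncomputable def sseqRespP {m : ℕ} (ℓ : Fin m → ℕ) (ρ : ℝ)
    (A : Finset (Fin m)) (b : Fin m → Bool) : ℝ :=
  ∏ i : Fin m,
    if i ∈ A then (if b i then 1 - (1 - ρ) ^ (ℓ i) else (1 - ρ) ^ (ℓ i))
    else (if b i then 0 else 1)

/-- Probability that the deterministic non-adaptive SSEQ algorithm `(h, ℓ)` answers
"yes" (`true`) when the hidden set `A ⊆ [m]` is drawn by including each element of `[m]`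
independently with probability `pr`. -/
noncomputable def sseqYesP (m : ℕ) (ℓ : Fin m → ℕ) (ρ pr : ℝ)
    (h : (Fin m → Bool) → Bool) : ℝ :=
  ∑ A : Finset (Fin m), (pr ^ A.card * (1 - pr) ^ (m - A.card)) *
    ∑ b : Fin m → Bool, (if h b then 1 else 0) * sseqRespP ℓ ρ A b

/-- The advantage of the SSEQ algorithm `(h, ℓ)` with parameters `n`, `m`, `ε`. -/
noncomputable def sseqAdv (n m : ℕ) (ℓ : Fin m → ℕ) (ε : ℝ)
    (h : (Fin m → Bool) → Bool) : ℝ :=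
  sseqYesP m ℓ (ε / Real.sqrt n) (1 / 2) h -
    sseqYesP m ℓ (ε / Real.sqrt n) (1 / 2 + Real.logb 2 n / Real.sqrt n) h

/-- Swap the order of two finite sums with separated factors. -/
lemma sseq_swap {α β : Type*} [Fintype α] [Fintype β] (f : α → ℝ) (g : β → ℝ)
    (R : α → β → ℝ) :
    ∑ a : α, f a * ∑ b : β, g b * R a b = ∑ b : β, g b * ∑ a : α, f a * R a b := by
  simp_rw [Finset.mul_sum]
  rw [Finset.sum_comm]
  exact Finset.sum_congr rfl fun b _ => Finset.sum_congr rfl fun a _ => by ring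

/-- Average of the oracle response probability over the prior on hidden sets. -/
noncomputable def sseqT (m : ℕ) (ℓ : Fin m → ℕ) (ρ pr : ℝ) (c : Fin m → Bool) : ℝ :=
  ∑ A : Finset (Fin m), (pr ^ A.card * (1 - pr) ^ (m - A.card)) * sseqRespP ℓ ρ A c

lemma sseqYesP_eq_sum_T (m : ℕ) (ℓ : Fin m → ℕ) (ρ pr : ℝ)
    (h : (Fin m → Bool) → Bool) :
    sseqYesP m ℓ ρ pr h
      = ∑ b : Fin m → Bool, (if h b then 1 else 0) * sseqT m ℓ ρ pr b := by
  unfold sseqYesP sseqT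
  exact sseq_swap _ _ _

theorem stmt13 (n m : ℕ) (ε : ℝ)
    (hρ₀ : 0 < ε / Real.sqrt n) (hρ₁ : ε / Real.sqrt n ≤ 1)
    (ℓ ℓ' : Fin m → ℕ) (hle : ∀ i, ℓ i ≤ ℓ' i)
    (h : (Fin m → Bool) → Bool) :
    ∃ h' : (Fin m → Bool) → Bool,
      sseqAdv n m ℓ ε h ≤ sseqAdv n m ℓ' ε h' := by
  set ρ := ε / Real.sqrt n with hρdef
  have h1 : 0 ≤ 1 - ρ := by linarith
  have h2 : 1 - ρ < 1 := by linarith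
  -- abbreviations for per-coordinate retention probabilities
  set p : Fin m → ℝ := fun i => (1 - ρ) ^ (ℓ i) with hpdef
  set p' : Fin m → ℝ := fun i => (1 - ρ) ^ (ℓ' i) with hp'def
  have hp'le : ∀ i, p' i ≤ p i := fun i => pow_le_pow_of_le_one h1 (by linarith) (hle i)
  have hple1 : ∀ i, p i ≤ 1 := fun i => pow_le_one₀ h1 (by linarith)
  have hp'0 : ∀ i, 0 ≤ p' i := fun i => pow_nonneg h1 _
  -- the per-coordinate flip probability q i
  set q : Fin m → ℝ := fun i => if ℓ' i = 0 then 1 else (1 - p i) / (1 - p' i) with hqdef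
  have hq0 : ∀ i, 0 ≤ q i := by
    intro i
    simp only [hqdef]
    split
    · norm_num
    · next hne =>
      have : p' i < 1 := pow_lt_one₀ h1 h2 hne
      exact div_nonneg (by linarith [hple1 i]) (by linarith)
  have hq1 : ∀ i, q i ≤ 1 := by
    intro i
    simp only [hqdef]
    split
    · exact le_rfl
    · next hne =>
      have : p' i < 1 := pow_lt_one₀ h1 h2 hne
      rw [div_le_one (by linarith)]
      linarith [hp'le i]
  have hqA : ∀ i, q i * (1 - p' i) = 1 - p i := by
    intro i
    simp only [hqdef]
    split
    · next h0 =>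
      have h0' : ℓ i = 0 := Nat.le_zero.mp (h0 ▸ hle i)
      simp [hpdef, hp'def, h0, h0']
    · next hne =>
      have h3 : p' i < 1 := pow_lt_one₀ h1 h2 hne
      exact div_mul_cancel₀ _ (by linarith : (1:ℝ) - p' i ≠ 0)
  have hqB : ∀ i, (1 - q i) * (1 - p' i) = p i - p' i := by
    intro i
    have := hqA i
    nlinarith [hqA i]
  -- the simulation kernel
  set w : Fin m → Bool → Bool → ℝ :=
    fun i c b => if c then (if b then q i else 1 - q i) else (if b then 0 else 1)
    with hwdef
  set W : (Fin m → Bool) → (Fin m → Bool) → ℝ := fun c b => ∏ i, w i (c i) (b i)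
    with hWdef
  have hw0 : ∀ i (c b : Bool), 0 ≤ w i c b := by
    intro i c b
    cases c <;> cases b <;> simp [hwdef] <;> [skip; skip] <;>
      first | linarith [hq1 i] | exact hq0 i
  have hW0 : ∀ c b, 0 ≤ W c b := fun c b => Finset.prod_nonneg fun i _ => hw0 i _ _
  -- key kernel identity: the ℓ-oracle is a postprocessing of the ℓ'-oracle
  have hker : ∀ (A : Finset (Fin m)) (b : Fin m → Bool),
      sseqRespP ℓ ρ A b = ∑ c : Fin m → Bool, W c b * sseqRespP ℓ' ρ A c := by
    intro A b
    have coord : ∀ i : Fin m,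
        (if i ∈ A then (if b i then 1 - (1 - ρ) ^ (ℓ i) else (1 - ρ) ^ (ℓ i))
          else (if b i then (0:ℝ) else 1))
        = ∑ c : Bool, w i c (b i) *
            (if i ∈ A then (if c then 1 - (1 - ρ) ^ (ℓ' i) else (1 - ρ) ^ (ℓ' i))
              else (if c then (0:ℝ) else 1)) := by
      intro i
      rw [Fintype.sum_bool]
      have hA := hqA i
      have hB := hqB i
      simp only [hpdef, hp'def] at hA hB
      by_cases hiA : i ∈ A <;> cases hb : b i <;> simp [hwdef, hiA, hb] <;> try nlinarith
    calc sseqRespP ℓ ρ A b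
        = ∏ i : Fin m, ∑ c : Bool, w i c (b i) *
            (if i ∈ A then (if c then 1 - (1 - ρ) ^ (ℓ' i) else (1 - ρ) ^ (ℓ' i))
              else (if c then (0:ℝ) else 1)) :=
          Finset.prod_congr rfl fun i _ => coord i
      _ = ∑ c : Fin m → Bool, ∏ i : Fin m, w i (c i) (b i) *
            (if i ∈ A then (if c i then 1 - (1 - ρ) ^ (ℓ' i) else (1 - ρ) ^ (ℓ' i))
              else (if c i then (0:ℝ) else 1)) := by
          rw [Finset.prod_univ_sum, Fintype.piFinset_univ]
      _ = ∑ c : Fin m → Bool, W c b * sseqRespP ℓ' ρ A c := by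
          refine Finset.sum_congr rfl fun c _ => ?_
          rw [Finset.prod_mul_distrib]
          rfl
  -- the kernel is stochastic
  have hWsum : ∀ c : Fin m → Bool, ∑ b : Fin m → Bool, W c b = 1 := by
    intro c
    have : ∀ i : Fin m, ∑ b : Bool, w i (c i) b = 1 := by
      intro i
      rw [Fintype.sum_bool]
      cases hc : c i <;> simp [hwdef]
    calc ∑ b : Fin m → Bool, W c b
        = ∏ i : Fin m, ∑ b : Bool, w i (c i) b := by
          rw [Finset.prod_univ_sum, Fintype.piFinset_univ]; try rfl
      _ = 1 := by rw [Finset.prod_congr rfl fun i _ => this i, Finset.prod_const_one]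
  -- the induced fractional decision rule
  set g : (Fin m → Bool) → ℝ :=
    fun c => ∑ b : Fin m → Bool, (if h b then 1 else 0) * W c b with hgdef
  have hg0 : ∀ c, 0 ≤ g c := by
    intro c
    exact Finset.sum_nonneg fun b _ => mul_nonneg (by positivity) (hW0 c b)
  have hg1 : ∀ c, g c ≤ 1 := by
    intro c
    calc g c ≤ ∑ b : Fin m → Bool, W c b := by
          refine Finset.sum_le_sum fun b _ => ?_
          by_cases hb : h b <;> simp [hb, hW0 c b]
      _ = 1 := hWsum c
  -- main rearrangement for the ℓ-algorithm
  have hyes : ∀ pr : ℝ, sseqYesP m ℓ ρ pr h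
      = ∑ c : Fin m → Bool, g c * sseqT m ℓ' ρ pr c := by
    intro pr
    rw [sseqYesP_eq_sum_T]
    have step1 : ∀ b : Fin m → Bool,
        sseqT m ℓ ρ pr b = ∑ c : Fin m → Bool, sseqT m ℓ' ρ pr c * W c b := by
      intro b
      unfold sseqT
      simp_rw [hker]
      have := sseq_swap (fun A : Finset (Fin m) => pr ^ A.card * (1 - pr) ^ (m - A.card))
        (fun c : Fin m → Bool => W c b) (fun A c => sseqRespP ℓ' ρ A c)
      rw [this]
      exact Finset.sum_congr rfl fun c _ => by rw [mul_comm]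
    simp_rw [step1]
    rw [sseq_swap (fun b : Fin m → Bool => if h b then (1:ℝ) else 0)
      (fun c : Fin m → Bool => sseqT m ℓ' ρ pr c) (fun b c => W c b)]
    exact Finset.sum_congr rfl fun c _ => mul_comm _ _
  -- the difference functional
  set pr₂ : ℝ := 1 / 2 + Real.logb 2 n / Real.sqrt n with hpr₂def
  set D : (Fin m → Bool) → ℝ :=
    fun c => sseqT m ℓ' ρ (1 / 2) c - sseqT m ℓ' ρ pr₂ c with hDdef
  refine ⟨fun c => decide (0 ≤ D c), ?_⟩
  have hadv' : sseqAdv n m ℓ' ε (fun c => decide (0 ≤ D c))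
      = ∑ c : Fin m → Bool, (if 0 ≤ D c then 1 else 0) * D c := by
    unfold sseqAdv
    rw [sseqYesP_eq_sum_T, sseqYesP_eq_sum_T, ← Finset.sum_sub_distrib]
    refine Finset.sum_congr rfl fun c _ => ?_
    simp only [decide_eq_true_eq, hDdef]
    ring
  have hadv : sseqAdv n m ℓ ε h = ∑ c : Fin m → Bool, g c * D c := by
    unfold sseqAdv
    rw [hyes, hyes, ← Finset.sum_sub_distrib]
    refine Finset.sum_congr rfl fun c _ => ?_
    simp only [hDdef]
    ring
  rw [hadv, hadv']
  refine Finset.sum_le_sum fun c _ => ?_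
  by_cases hD : 0 ≤ D c
  · simp only [hD, if_true]
    nlinarith [hg1 c]
  · simp only [hD, if_false]
    push_neg at hD
    nlinarith [hg0 c]
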